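/- The largest eigenvalue of the 2×2 block M of the baseline model is at most 1 and nonnegative: λ₊ = (tr M + sqrt((tr M)² − 4 det M))/2 satisfies 0 ≤ λ₊ ≤ 1. -/
import Mathlib

theorem lambda_plus_in_unit_interval (α d μ r : ℝ) (hα : 0 ≤ α) (hd : 0 ≤ d)
    (hμ : 0 < μ) (hr0 : 0 ≤ r) (hr1 : r ≤ 1) :
    let c : ℝ := Real.exp (-α * d)
    let s : ℝ := 1 - (r/2) * (1 + Real.exp (-d/μ))
    let q : ℝ := r * (1 - Real.exp (-d/μ))
    let M : Matrix (Fin 2) (Fin 2) ℝ := !![s * (1 - c), s * c; q * (1 - c), q * c + (1 - r)]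
    let lamPlus : ℝ := (M.trace + Real.sqrt (M.trace ^ 2 - 4 * M.det)) / 2
    0 ≤ lamPlus ∧ lamPlus ≤ 1 := by
  intro c s q M lamPlus
  have he0 : 0 < Real.exp (-d/μ) := Real.exp_pos _
  have he1 : Real.exp (-d/μ) ≤ 1 :=
    Real.exp_le_one_iff.mpr (div_nonpos_of_nonpos_of_nonneg (by linarith) hμ.le)
  have hc0 : 0 < c := Real.exp_pos _
  have hc1 : c ≤ 1 := Real.exp_le_one_iff.mpr (by nlinarith)
  have hs : s = 1 - (r/2) * (1 + Real.exp (-d/μ)) := rfl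
  have hq : q = r * (1 - Real.exp (-d/μ)) := rfl
  have htr : M.trace = s * (1 - c) + (q * c + (1 - r)) := by
    simp [M, Matrix.trace_fin_two]
  have hdet : M.det = s * (1 - c) * (1 - r) := by
    simp [M, Matrix.det_fin_two]; ring
  have hlam : lamPlus = (M.trace + Real.sqrt (M.trace ^ 2 - 4 * M.det)) / 2 := rfl
  rw [hlam, htr, hdet]
  clear_value lamPlus M q s c
  clear hlam htr hdet
  set E := Real.exp (-d/μ) with hE
  clear_value E
  set C := c with hC
  clear_value C
  subst hs hq
  have hs0 : 0 ≤ 1 - (r/2) * (1 + E) := by nlinarith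
  have hs1 : 1 - (r/2) * (1 + E) ≤ 1 := by nlinarith
  set S := 1 - (r/2) * (1 + E) with hS
  clear_value S
  have hq0 : 0 ≤ r * (1 - E) := by nlinarith
  set Q := r * (1 - E) with hQ
  clear_value Q
  have hqc : Q * C ≤ r * (1 - E * C) := by
    rw [hQ]
    nlinarith [mul_nonneg (mul_nonneg hr0 hc0.le) he0.le]
  set t := S * (1 - C) + (Q * C + (1 - r)) with ht
  clear_value t
  set D := S * (1 - C) * (1 - r) with hD
  clear_value D
  have ht0 : 0 ≤ t := by
    have h1 := mul_nonneg hs0 (by linarith : (0:ℝ) ≤ 1 - C)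
    have h2 := mul_nonneg hq0 hc0.le
    rw [ht]; linarith
  have hD0 : 0 ≤ D := by
    rw [hD]; exact mul_nonneg (mul_nonneg hs0 (by linarith)) (by linarith)
  have hkey : t - D ≤ 1 := by
    rw [ht, hD]
    have h1 : S * (1 - C) * r ≤ 1 * (1 - C) * r := by
      nlinarith [mul_nonneg (mul_nonneg (sub_nonneg.mpr hs1) (sub_nonneg.mpr hc1)) hr0]
    have h2 : r * (1 - E * C) ≤ r := by
      nlinarith [mul_nonneg (mul_nonneg hr0 he0.le) hc0.le]
    nlinarith
  have hq1 : Q ≤ 1 := by rw [hQ]; nlinarith [mul_nonneg hr0 he0.le]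
  have ht2 : t ≤ 2 := by
    rw [ht]
    nlinarith [mul_nonneg (sub_nonneg.mpr hs1) (sub_nonneg.mpr hc1),
      mul_nonneg (sub_nonneg.mpr hq1) hc0.le]
  have hsqrt : Real.sqrt (t ^ 2 - 4 * D) ≤ 2 - t := by
    have h1 : t ^ 2 - 4 * D ≤ (2 - t) ^ 2 := by nlinarith
    calc Real.sqrt (t ^ 2 - 4 * D) ≤ Real.sqrt ((2 - t) ^ 2) := Real.sqrt_le_sqrt h1
      _ = 2 - t := by rw [Real.sqrt_sq (by linarith)]
  have hnn := Real.sqrt_nonneg (t ^ 2 - 4 * D)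
  constructor
  · linarith
  · linarith
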